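/- Combining flow conservation with the subtour elimination constraints: if x satisfies the degree constraints (each damaged node with positive demand has exactly one outgoing and one incoming selected arc), flow conservation between depot 0 and depot N, and there exists t with x_{ij} = 1 ⟹ t_j = t_i + 1, then the selected arcs form a single simple directed path from depot 0 to depot N visiting every damaged node with positive demand. -/
import Mathlib

open Finset

namespace Stmt10Aux

variable {α : Type*} [Fintype α] [DecidableEq α]

def outd (x : α → α → Bool) (i : α) : ℕ := (univ.filter fun j => x i j = true).card
def ind (x : α → α → Bool) (j : α) : ℕ := (univ.filter fun i => x i j = true).card
def ec (x : α → α → Bool) : ℕ := (univ.filter fun p : α × α => x p.1 p.2 = true).card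

def remove (x : α → α → Bool) (a c : α) (i j : α) : Bool :=
  x i j && !(decide (i = a) && decide (j = c))

lemma remove_eq_true {x : α → α → Bool} {a c i j : α} :
    remove x a c i j = true ↔ x i j = true ∧ ¬(i = a ∧ j = c) := by
  simp [remove]; tauto

lemma outd_remove_self {x : α → α → Bool} {a c : α} (h : x a c = true) :
    outd (remove x a c) a = outd x a - 1 := by
  have : (univ.filter fun j => remove x a c a j = true)
      = (univ.filter fun j => x a j = true).erase c := by
    ext j; simp [remove_eq_true, Finset.mem_erase]; tauto
  rw [outd, this, Finset.card_erase_of_mem (by simp [h])]; rfl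

lemma outd_remove_other {x : α → α → Bool} {a c i : α} (h : i ≠ a) :
    outd (remove x a c) i = outd x i := by
  unfold outd; congr 1; ext j; simp [remove_eq_true]; tauto

lemma ind_remove_self {x : α → α → Bool} {a c : α} (h : x a c = true) :
    ind (remove x a c) c = ind x c - 1 := by
  have : (univ.filter fun i => remove x a c i c = true)
      = (univ.filter fun i => x i c = true).erase a := by
    ext i; simp [remove_eq_true, Finset.mem_erase]; tauto
  rw [ind, this, Finset.card_erase_of_mem (by simp [h])]; rfl

lemma ind_remove_other {x : α → α → Bool} {a c j : α} (h : j ≠ c) :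
    ind (remove x a c) j = ind x j := by
  unfold ind; congr 1; ext i; simp [remove_eq_true]; tauto

lemma ec_remove {x : α → α → Bool} {a c : α} (h : x a c = true) :
    ec (remove x a c) = ec x - 1 := by
  have : (univ.filter fun p : α × α => remove x a c p.1 p.2 = true)
      = (univ.filter fun p : α × α => x p.1 p.2 = true).erase (a, c) := by
    ext p; simp [remove_eq_true, Finset.mem_erase, Prod.ext_iff]; tauto
  rw [ec, this, Finset.card_erase_of_mem (by simp [h])]; rfl

lemma ind_pos {x : α → α → Bool} {a c : α} (h : x a c = true) : 1 ≤ ind x c :=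
  Finset.card_pos.mpr ⟨a, by simp [h]⟩

lemma ec_pos {x : α → α → Bool} {a c : α} (h : x a c = true) : 1 ≤ ec x :=
  Finset.card_pos.mpr ⟨(a, c), by simp [h]⟩

/-- A balanced (in-degree ≤ out-degree everywhere) digraph with a strict potential
has no edges. -/
lemma balanced_empty (x : α → α → Bool) (t : α → ℝ)
    (hmtz : ∀ i j, x i j = true → t j = t i + 1)
    (hbal : ∀ v, ind x v ≤ outd x v) : ∀ i j, x i j ≠ true := by
  by_contra h
  push_neg at h
  obtain ⟨i, j, hij⟩ := h
  have hne : (univ.filter fun p : α × α => x p.1 p.2 = true).Nonempty :=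
    ⟨(i, j), by simp [hij]⟩
  obtain ⟨p, hp, hmax⟩ := Finset.exists_max_image _ (fun p => t p.2) hne
  simp only [Finset.mem_filter] at hp
  have h1 : 1 ≤ ind x p.2 := ind_pos hp.2
  have h2 : 1 ≤ outd x p.2 := le_trans h1 (hbal p.2)
  rw [outd] at h2
  obtain ⟨w, hw⟩ := Finset.card_pos.mp h2
  simp only [Finset.mem_filter] at hw
  have := hmax (p.2, w) (by simp [hw.2])
  have := hmtz p.2 w hw.2
  linarith

lemma key (t : α → ℝ) : ∀ (n : ℕ) (x : α → α → Bool) (a b : α), a ≠ b →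
    (∀ j, j ≠ a → j ≠ b → ind x j = outd x j) →
    outd x a = ind x a + 1 →
    ind x b = outd x b + 1 →
    (∀ i j, x i j = true → t j = t i + 1) →
    ec x = n →
    ∃ (m : ℕ) (v : Fin (m + 1) → α),
      (∀ k : Fin (m + 1), t (v k) = t a + k.val) ∧ v 0 = a ∧ v (Fin.last m) = b ∧
      (∀ k : Fin m, x (v k.castSucc) (v k.succ) = true) ∧
      (∀ i j, x i j = true → ∃ k : Fin m, v k.castSucc = i ∧ v k.succ = j) := by
  intro n
  induction n using Nat.strong_induction_on with
  | _ n IH =>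
    intro x a b hab hcons ha hb hmtz hn
    -- a has an out-edge
    have hout : 0 < outd x a := by omega
    rw [outd] at hout
    obtain ⟨c, hc⟩ := Finset.card_pos.mp hout
    simp only [Finset.mem_filter] at hc
    have hc : x a c = true := hc.2
    have hca : c ≠ a := by
      intro h
      have := hmtz a c hc
      rw [h] at this
      linarith
    by_cases hcb : c = b
    · -- the removed graph is balanced, hence empty: the path is just [a, b]
      subst hcb
      have honly : ∀ i j, x i j = true → i = a ∧ j = c := by
        intro i j hij
        by_contra hne
        have hrm : remove x a c i j = true := remove_eq_true.mpr ⟨hij, hne⟩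
        refine balanced_empty (remove x a c) t
          (fun i' j' h' => hmtz i' j' (remove_eq_true.mp h').1) ?_ i j hrm
        intro v
        by_cases hva : v = a
        · subst hva
          rw [outd_remove_self hc, ind_remove_other hca.symm]
          omega
        by_cases hvc : v = c
        · subst hvc
          rw [outd_remove_other hva, ind_remove_self hc]
          omega
        · rw [outd_remove_other hva, ind_remove_other hvc, hcons v hva hvc]
      refine ⟨1, ![a, c], ?_, rfl, rfl, ?_, ?_⟩
      · intro k
        fin_cases k
        · simp
        · simp [hmtz a c hc]
      · intro k
        fin_cases k
        simpa using hc
      · intro i j hij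
        obtain ⟨hi, hj⟩ := honly i j hij
        exact ⟨0, by simp [hi, hj]⟩
    · -- recurse on the graph with edge (a,c) removed, from c to b
      have hn1 : 1 ≤ n := hn ▸ ec_pos hc
      have hcons' : ∀ j, j ≠ c → j ≠ b → ind (remove x a c) j = outd (remove x a c) j := by
        intro j hjc hjb
        by_cases hja : j = a
        · subst hja
          rw [outd_remove_self hc, ind_remove_other hjc]
          omega
        · rw [outd_remove_other hja, ind_remove_other hjc, hcons j hja hjb]
      have ha' : outd (remove x a c) c = ind (remove x a c) c + 1 := by
        rw [outd_remove_other hca, ind_remove_self hc]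
        have h1 := ind_pos hc
        have h2 := hcons c hca hcb
        omega
      have hb' : ind (remove x a c) b = outd (remove x a c) b + 1 := by
        rw [outd_remove_other (Ne.symm hab), ind_remove_other (fun h => hcb h.symm)]
        exact hb
      obtain ⟨m', v', ht', hv0', hvl', hedge', hcov'⟩ :=
        IH (n - 1) (by omega) (remove x a c) c b hcb hcons' ha' hb'
          (fun i j h => hmtz i j (remove_eq_true.mp h).1)
          (by rw [ec_remove hc, hn])
      refine ⟨m' + 1, Fin.cases a v', ?_, ?_, ?_, ?_, ?_⟩
      · intro k
        induction k using Fin.cases with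
        | zero => simp
        | succ k =>
          simp only [Fin.cases_succ, Fin.val_succ]
          have h1 := ht' k
          have hac := hmtz a c hc
          push_cast
          linarith
      · simp
      · simp only [← Fin.succ_last, Fin.cases_succ, hvl']
      · intro k
        induction k using Fin.cases with
        | zero =>
          simp only [Fin.castSucc_zero, Fin.cases_zero, Fin.cases_succ, hv0']
          exact hc
        | succ k =>
          simp only [← Fin.succ_castSucc, Fin.cases_succ]
          exact (remove_eq_true.mp (hedge' k)).1
      · intro i j hij
        by_cases hiaj : i = a ∧ j = c
        · refine ⟨0, ?_, ?_⟩
          · simp only [Fin.castSucc_zero, Fin.cases_zero]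
            exact hiaj.1.symm
          · simp only [Fin.cases_succ, hv0']
            exact hiaj.2.symm
        · obtain ⟨k, hk1, hk2⟩ := hcov' i j (remove_eq_true.mpr ⟨hij, hiaj⟩)
          refine ⟨k.succ, ?_, ?_⟩
          · simp only [← Fin.succ_castSucc, Fin.cases_succ]
            exact hk1
          · simp only [Fin.cases_succ]  -- need (k.succ).succ case
            exact hk2

end Stmt10Aux

/-- Degree constraints at damaged nodes with positive demand,
flow conservation between depot `0` and depot `N`, together with MTZ-style
ordering variables, force the selected arcs to form a single simple directed
path from depot `0` to depot `N` that visits every damaged node with positive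
demand. -/
theorem stmt_10 (N : ℕ) (hN : 1 ≤ N)
    (D : Finset (Fin (N + 1))) (q : Fin (N + 1) → ℝ)
    (x : Fin (N + 1) → Fin (N + 1) → Bool) (t : Fin (N + 1) → ℝ)
    (hDmem : ∀ i ∈ D, i ≠ 0 ∧ i ≠ Fin.last N)
    (hdegOut : ∀ i ∈ D, 0 < q i →
      (Finset.univ.filter fun j => x i j = true).card = 1)
    (hdegIn : ∀ j ∈ D, 0 < q j →
      (Finset.univ.filter fun i => x i j = true).card = 1)
    (hconserve : ∀ j : Fin (N + 1), j ≠ 0 → j ≠ Fin.last N →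
      (Finset.univ.filter fun i => x i j = true).card =
        (Finset.univ.filter fun i => x j i = true).card)
    (hdepot0 : (Finset.univ.filter fun j => x 0 j = true).card =
        (Finset.univ.filter fun j => x j 0 = true).card + 1)
    (hdepotN : (Finset.univ.filter fun j => x j (Fin.last N) = true).card =
        (Finset.univ.filter fun j => x (Fin.last N) j = true).card + 1)
    (hmtz : ∀ i j, x i j = true → t j = t i + 1) :
    ∃ (m : ℕ) (v : Fin (m + 1) → Fin (N + 1)),
      Function.Injective v ∧
      v 0 = 0 ∧ v (Fin.last m) = Fin.last N ∧
      (∀ k : Fin m, x (v k.castSucc) (v k.succ) = true) ∧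
      (∀ i ∈ D, 0 < q i → ∃ k, v k = i) ∧
      (∀ i j, x i j = true → ∃ k : Fin m, v k.castSucc = i ∧ v k.succ = j) := by
  have hab : (0 : Fin (N + 1)) ≠ Fin.last N := by
    intro h
    have := congrArg Fin.val h
    simp [Fin.val_last] at this
    omega
  obtain ⟨m, v, ht, hv0, hvl, hedge, hcov⟩ :=
    Stmt10Aux.key t (Stmt10Aux.ec x) x 0 (Fin.last N) hab
      (fun j hj0 hjl => hconserve j hj0 hjl) hdepot0 hdepotN hmtz rfl
  refine ⟨m, v, ?_, hv0, hvl, hedge, ?_, hcov⟩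
  · intro k l h
    have h1 := ht k
    have h2 := ht l
    rw [h] at h1
    have : ((k : ℕ) : ℝ) = ((l : ℕ) : ℝ) := by linarith
    exact Fin.ext (Nat.cast_injective this)
  · intro i hi hq
    have hcard := hdegOut i hi hq
    have : (Finset.univ.filter fun j => x i j = true).Nonempty :=
      Finset.card_pos.mp (by omega)
    obtain ⟨j, hj⟩ := this
    simp only [Finset.mem_filter] at hj
    obtain ⟨k, hk, -⟩ := hcov i j hj.2
    exact ⟨k.castSucc, hk⟩
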